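/- Let d ≥ 5 be an integer. In ℂ[t₀,t₁,t₂,t₃], let h be homogeneous of degree d−4 involving only t₀,t₁, let G be homogeneous of degree d−1 involving only t₀,t₁,t₂, and let H be homogeneous of degree d−1. Set f = (t₀t₁)²·h + t₂·G + t₃·H. Assume that the four partial derivatives of f do not all vanish at the point (1,0,0,0), and do not all vanish at the point (0,1,0,0). Let Ḡ, H̄ ∈ ℂ[t₀,t₁] be the homogeneous degree-(d−1) polynomials obtained from G and H by substituting t₂ = t₃ = 0. Then t₀t₁·V_{d−2} + span_ℂ{t₀Ḡ, t₁Ḡ, t₀H̄, t₁H̄} = V_d. -/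

import Mathlib

/-!
A binary form `p` of degree `n ≥ 1` decomposes as `p = p(1,0)·t₀ⁿ + p(0,1)·t₁ⁿ + t₀t₁·q` with `q`
of degree `n - 2`, so `t₀t₁·V_{n-2}` is complemented in `V_n` by `t₀ⁿ` and `t₁ⁿ`. At `(1:0:0:0)` the
partials `∂₀f`, `∂₁f` vanish identically and `∂₂f = G`, `∂₃f = H`, so smoothness there means
`Ḡ(1,0) ≠ 0` or `H̄(1,0) ≠ 0`; then `t₀Ḡ` (or `t₀H̄`) is a nonzero multiple of `t₀ᵈ` modulo
`t₀t₁·V_{d-2}`. Symmetrically, smoothness at `(0:1:0:0)` produces `t₁ᵈ`.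
-/

open MvPolynomial

noncomputable section

/-- `V n` is the space of homogeneous polynomials of degree `n` in `ℂ[t₀,t₁]`. -/
abbrev V (n : ℕ) : Submodule ℂ (MvPolynomial (Fin 2) ℂ) :=
  MvPolynomial.homogeneousSubmodule (Fin 2) ℂ n

theorem isHomogeneous_X_mul {R σ : Type*} [CommSemiring R] {m : ℕ} (i : σ)
    {B : MvPolynomial σ R} (hB : B.IsHomogeneous m) : (X i * B).IsHomogeneous (m + 1) :=
  add_comm 1 m ▸ (isHomogeneous_X R i).mul hB

section BinaryForms

variable {R : Type*} [CommSemiring R]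

variable (R) in
/-- `t₀t₁·V_{n-2}`. For `n < 2` the truncated `n - 2` makes this `t₀t₁·V_0`, which is not
contained in `V_n`. -/
def mixedForms (n : ℕ) : Submodule R (MvPolynomial (Fin 2) R) :=
  (homogeneousSubmodule (Fin 2) R (n - 2)).map (LinearMap.mulLeft R (X 0 * X 1))

theorem mixedForms_le_homogeneousSubmodule {n : ℕ} (hn : 2 ≤ n) :
    mixedForms R n ≤ homogeneousSubmodule (Fin 2) R n := by
  rintro _ ⟨r, hr, rfl⟩
  have hdeg : n - 2 + 1 + 1 = n := by omega
  rw [mem_homogeneousSubmodule]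
  simpa only [LinearMap.mulLeft_apply, mul_assoc, hdeg] using
    isHomogeneous_X_mul 0 (isHomogeneous_X_mul 1 hr)

theorem homogeneousSubmodule_le_mixedForms_sup (n : ℕ) :
    homogeneousSubmodule (Fin 2) R n ≤ mixedForms R n ⊔ Submodule.span R {X 0 ^ n, X 1 ^ n} := by
  rw [homogeneousSubmodule_eq_finsupp_supported, AddMonoidAlgebra.supported_eq_span_single,
    Submodule.span_le]
  rintro _ ⟨m, hm, rfl⟩
  have hdeg : m 0 + m 1 = n := by simpa [Finsupp.degree_eq_sum, Fin.sum_univ_two] using hm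
  change monomial m (1 : R) ∈ _
  rw [monomial_fin_two, map_one, one_mul]
  rcases Nat.eq_zero_or_pos (m 0) with h0 | h0
  · exact Submodule.mem_sup_right (Submodule.subset_span (by simp [h0, ← hdeg]))
  rcases Nat.eq_zero_or_pos (m 1) with h1 | h1
  · exact Submodule.mem_sup_right (Submodule.subset_span (by simp [h1, ← hdeg]))
  obtain ⟨a, ha⟩ := Nat.exists_eq_add_of_lt h0
  obtain ⟨b, hb⟩ := Nat.exists_eq_add_of_lt h1
  refine Submodule.mem_sup_left ⟨X 0 ^ a * X 1 ^ b, ?_, ?_⟩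
  · rw [SetLike.mem_coe, mem_homogeneousSubmodule, show n - 2 = a + b by omega]
    exact (isHomogeneous_X_pow 0 a).mul (isHomogeneous_X_pow 1 b)
  · simp only [LinearMap.mulLeft_apply, ha, hb]
    ring

end BinaryForms

section BinaryFormsRing

variable {R : Type*} [CommRing R]

theorem sub_eval_smul_X_pow_mem_mixedForms {n : ℕ} (hn : n ≠ 0) {p : MvPolynomial (Fin 2) R}
    (hp : p ∈ mixedForms R n ⊔ Submodule.span R {X 0 ^ n, X 1 ^ n}) :
    p - eval ![1, 0] p • X 0 ^ n - eval ![0, 1] p • X 1 ^ n ∈ mixedForms R n := by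
  obtain ⟨_, ⟨r, hr, rfl⟩, q, hq, rfl⟩ := Submodule.mem_sup.1 hp
  obtain ⟨a, b, rfl⟩ := Submodule.mem_span_pair.1 hq
  have hr' : LinearMap.mulLeft R (X 0 * X 1) r ∈ mixedForms R n := Submodule.mem_map_of_mem hr
  convert hr' using 1
  simp [zero_pow hn, sub_sub, add_sub_cancel_right]

theorem eval_smul_add_eval_smul_mem {n : ℕ} (hn : n ≠ 0)
    {T : Submodule R (MvPolynomial (Fin 2) R)} (hT : mixedForms R n ≤ T)
    {p : MvPolynomial (Fin 2) R} (hp : p.IsHomogeneous n) (hpT : p ∈ T) :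
    eval ![1, 0] p • X 0 ^ n + eval ![0, 1] p • X 1 ^ n ∈ T := by
  have hrest := hT (sub_eval_smul_X_pow_mem_mixedForms hn
    (homogeneousSubmodule_le_mixedForms_sup n hp))
  simpa [sub_sub, sub_sub_cancel] using T.sub_mem hpT hrest

end BinaryFormsRing

section Field

variable {K : Type*} [Field K] {m : ℕ} {T : Submodule K (MvPolynomial (Fin 2) K)}
  {B : MvPolynomial (Fin 2) K}

theorem X_zero_pow_mem_of_X_zero_mul_mem (hT : mixedForms K (m + 1) ≤ T)
    (hB : B.IsHomogeneous m) (hBT : X 0 * B ∈ T) (hB0 : eval ![1, 0] B ≠ 0) :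
    X 0 ^ (m + 1) ∈ T := by
  have := eval_smul_add_eval_smul_mem m.add_one_ne_zero hT (isHomogeneous_X_mul 0 hB) hBT
  simpa [T.smul_mem_iff hB0] using this

theorem X_one_pow_mem_of_X_one_mul_mem (hT : mixedForms K (m + 1) ≤ T)
    (hB : B.IsHomogeneous m) (hBT : X 1 * B ∈ T) (hB1 : eval ![0, 1] B ≠ 0) :
    X 1 ^ (m + 1) ∈ T := by
  have := eval_smul_add_eval_smul_mem m.add_one_ne_zero hT (isHomogeneous_X_mul 1 hB) hBT
  simpa [T.smul_mem_iff hB1] using this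

end Field

section Restriction

variable {R : Type*} [CommSemiring R]

theorem eval_pderiv_eq_zero_iff {x : Fin 4 → R} (hx : x 0 * x 1 = 0) (hx2 : x 2 = 0)
    (hx3 : x 3 = 0) (h G H : MvPolynomial (Fin 4) R) :
    (∀ i, eval x (pderiv i ((X 0 * X 1) ^ 2 * h + X 2 * G + X 3 * H)) = 0) ↔
      eval x G = 0 ∧ eval x H = 0 := by
  simp [Fin.forall_fin_succ, pow_two, hx, hx2, hx3]

theorem isHomogeneous_aeval_X_X_zero_zero {n : ℕ} {G : MvPolynomial (Fin 4) R}
    (hG : G.IsHomogeneous n) :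
    (aeval ![X 0, X 1, 0, 0] G : MvPolynomial (Fin 2) R).IsHomogeneous n := by
  have hX : ∀ i, (![X 0, X 1, 0, 0] i : MvPolynomial (Fin 2) R).IsHomogeneous 1 := by
    intro i; fin_cases i <;> simp [isHomogeneous_X, isHomogeneous_zero]
  simpa only [one_mul] using hG.aeval _ hX

theorem eval_aeval_X_X_zero_zero (G : MvPolynomial (Fin 4) R) (x y : R) :
    eval ![x, y] (aeval ![X 0, X 1, 0, 0] G) = eval ![x, y, 0, 0] G := by
  have hpt : (fun i => aeval ![x, y] (![X 0, X 1, 0, 0] i : MvPolynomial (Fin 2) R)) =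
      ![x, y, 0, 0] := by
    funext i; fin_cases i <;> simp
  rw [← coe_aeval_eq_eval, ← coe_aeval_eq_eval]
  exact (comp_aeval_apply _ _ G).trans (by rw [hpt])

end Restriction

theorem statement5 (d : ℕ) (hd : 5 ≤ d)
    (h G H f : MvPolynomial (Fin 4) ℂ)
    (hGdeg : G.IsHomogeneous (d - 1))
    (hHdeg : H.IsHomogeneous (d - 1))
    (hf : f = (X 0 * X 1) ^ 2 * h + X 2 * G + X 3 * H)
    (hsm1 : ¬ ∀ i : Fin 4, MvPolynomial.eval ![1, 0, 0, 0] (pderiv i f) = 0)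
    (hsm2 : ¬ ∀ i : Fin 4, MvPolynomial.eval ![0, 1, 0, 0] (pderiv i f) = 0)
    (Gbar Hbar : MvPolynomial (Fin 2) ℂ)
    (hGbar : Gbar = MvPolynomial.aeval ![X 0, X 1, 0, 0] G)
    (hHbar : Hbar = MvPolynomial.aeval ![X 0, X 1, 0, 0] H) :
    (V (d - 2)).map (LinearMap.mulLeft ℂ (X 0 * X 1 : MvPolynomial (Fin 2) ℂ)) ⊔
        Submodule.span ℂ {X 0 * Gbar, X 1 * Gbar, X 0 * Hbar, X 1 * Hbar} = V d := by
  subst hf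
  obtain ⟨m, rfl⟩ : ∃ m, d = m + 1 := ⟨d - 1, by omega⟩
  rw [Nat.add_sub_cancel] at hGdeg hHdeg
  change mixedForms ℂ (m + 1) ⊔ _ = _
  set T := mixedForms ℂ (m + 1) ⊔
    Submodule.span ℂ {X 0 * Gbar, X 1 * Gbar, X 0 * Hbar, X 1 * Hbar}
  have hGbarDeg : Gbar.IsHomogeneous m := hGbar ▸ isHomogeneous_aeval_X_X_zero_zero hGdeg
  have hHbarDeg : Hbar.IsHomogeneous m := hHbar ▸ isHomogeneous_aeval_X_X_zero_zero hHdeg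
  have hgen {q} (hq : q ∈ ({X 0 * Gbar, X 1 * Gbar, X 0 * Hbar, X 1 * Hbar} : Set _)) : q ∈ T :=
    Submodule.mem_sup_right (Submodule.subset_span hq)
  have hsmooth₁ : eval ![1, 0] Gbar ≠ 0 ∨ eval ![1, 0] Hbar ≠ 0 := by
    rw [hGbar, hHbar, eval_aeval_X_X_zero_zero, eval_aeval_X_X_zero_zero, ← not_and_or]
    exact (eval_pderiv_eq_zero_iff (by simp) rfl rfl h G H).not.1 hsm1
  have hsmooth₂ : eval ![0, 1] Gbar ≠ 0 ∨ eval ![0, 1] Hbar ≠ 0 := by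
    rw [hGbar, hHbar, eval_aeval_X_X_zero_zero, eval_aeval_X_X_zero_zero, ← not_and_or]
    exact (eval_pderiv_eq_zero_iff (by simp) rfl rfl h G H).not.1 hsm2
  have hX0 : X 0 ^ (m + 1) ∈ T := hsmooth₁.elim
    (X_zero_pow_mem_of_X_zero_mul_mem le_sup_left hGbarDeg (hgen (by simp)))
    (X_zero_pow_mem_of_X_zero_mul_mem le_sup_left hHbarDeg (hgen (by simp)))
  have hX1 : X 1 ^ (m + 1) ∈ T := hsmooth₂.elim
    (X_one_pow_mem_of_X_one_mul_mem le_sup_left hGbarDeg (hgen (by simp)))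
    (X_one_pow_mem_of_X_one_mul_mem le_sup_left hHbarDeg (hgen (by simp)))
  refine le_antisymm (sup_le (mixedForms_le_homogeneousSubmodule (by omega)) ?_)
    ((homogeneousSubmodule_le_mixedForms_sup _).trans (sup_le le_sup_left ?_))
  · simp only [Submodule.span_le, Set.insert_subset_iff, Set.singleton_subset_iff]
    exact ⟨isHomogeneous_X_mul 0 hGbarDeg, isHomogeneous_X_mul 1 hGbarDeg,
      isHomogeneous_X_mul 0 hHbarDeg, isHomogeneous_X_mul 1 hHbarDeg⟩
  · exact Submodule.span_le.2 (Set.pair_subset hX0 hX1)
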